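/- arXiv:1612.08280 — 4 statements merged into one kernel-verified Lean document; each statement's English description precedes it below -/
import Mathlib

section
/- Let ρ ∈ (−1,1) and u, v ∈ ℝ. Then ∫_u^∞ ∫_v^∞ x · f_ρ(x,y) dy dx = φ(u)·Φ̄((v − ρu)/√(1−ρ²)) + ρ·φ(v)·Φ̄((u − ρv)/√(1−ρ²)). -/
/-!
With `s = √(1 - ρ²)` the density factors as `f_ρ(x, y) = φ(x) · φ((y - ρx) / s) / s`, so the inner
integral is `x φ(x) Φ̄((v - ρx) / s)`. Since `x φ(x) = -φ'(x)`, integrating by parts over `(u, ∞)`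
leaves the boundary term `φ(u) Φ̄((v - ρu) / s)` plus `ρ ∫_u^∞ f_ρ(x, v) dx`, because the derivative
of the survival factor recombines with `φ(x)` into the density at `(x, v)`. By the symmetry of `f_ρ`
and the same factorization, that last integral is `φ(v) Φ̄((u - ρv) / s)`.
-/

open MeasureTheory

/-- Density of the standard normal distribution. -/
noncomputable def stdNormalPDF (x : ℝ) : ℝ :=
  (Real.sqrt (2 * Real.pi))⁻¹ * Real.exp (-x ^ 2 / 2)

/-- Survival function of the standard normal distribution. -/
noncomputable def stdNormalSurv (x : ℝ) : ℝ :=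
  ∫ t in Set.Ioi x, stdNormalPDF t

/-- Density of the standard bivariate normal distribution with correlation `ρ`. -/
noncomputable def bvnPDF (ρ x y : ℝ) : ℝ :=
  (2 * Real.pi * Real.sqrt (1 - ρ ^ 2))⁻¹ *
    Real.exp (-(x ^ 2 - 2 * ρ * x * y + y ^ 2) / (2 * (1 - ρ ^ 2)))

open Real Set Filter Topology ProbabilityTheory

lemma stdNormalPDF_eq_gaussianPDFReal : stdNormalPDF = gaussianPDFReal 0 1 := by
  ext x
  simp [stdNormalPDF, gaussianPDFReal]

lemma stdNormalPDF_nonneg (x : ℝ) : 0 ≤ stdNormalPDF x := by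
  rw [stdNormalPDF_eq_gaussianPDFReal]
  exact gaussianPDFReal_nonneg _ _ _

lemma continuous_stdNormalPDF : Continuous stdNormalPDF := by
  unfold stdNormalPDF
  fun_prop

lemma integrable_stdNormalPDF : Integrable stdNormalPDF := by
  rw [stdNormalPDF_eq_gaussianPDFReal]
  exact integrable_gaussianPDFReal _ _

lemma integral_stdNormalPDF : ∫ x, stdNormalPDF x = 1 := by
  rw [stdNormalPDF_eq_gaussianPDFReal]
  exact integral_gaussianPDFReal_eq_one _ one_ne_zero

lemma integrable_mul_stdNormalPDF : Integrable fun x => x * stdNormalPDF x := by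
  refine ((integrable_mul_exp_neg_mul_sq (b := 2⁻¹) (by norm_num)).const_mul
    (√(2 * π))⁻¹).congr (Eventually.of_forall fun x => ?_)
  simp only [stdNormalPDF]
  ring_nf

lemma hasDerivAt_stdNormalPDF (x : ℝ) : HasDerivAt stdNormalPDF (-x * stdNormalPDF x) x := by
  have h := (((hasDerivAt_pow 2 x).neg.div_const 2).exp).const_mul (√(2 * π))⁻¹
  exact h.congr_deriv (by simp only [stdNormalPDF, Pi.neg_apply]; ring)

lemma tendsto_stdNormalPDF_atTop : Tendsto stdNormalPDF atTop (𝓝 0) := by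
  have h : Tendsto (fun x : ℝ => -x ^ 2 / 2) atTop atBot :=
    (tendsto_neg_atTop_atBot.comp (tendsto_pow_atTop two_ne_zero)).atBot_div_const two_pos
  rw [← mul_zero (√(2 * π))⁻¹]
  exact (tendsto_exp_atBot.comp h).const_mul _

lemma stdNormalSurv_nonneg (x : ℝ) : 0 ≤ stdNormalSurv x :=
  setIntegral_nonneg measurableSet_Ioi fun t _ => stdNormalPDF_nonneg t

lemma stdNormalSurv_le_one (x : ℝ) : stdNormalSurv x ≤ 1 :=
  integral_stdNormalPDF ▸ setIntegral_le_integral integrable_stdNormalPDF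
    (Eventually.of_forall stdNormalPDF_nonneg)

lemma norm_stdNormalSurv_le_one (x : ℝ) : ‖stdNormalSurv x‖ ≤ 1 := by
  rw [norm_of_nonneg (stdNormalSurv_nonneg x)]
  exact stdNormalSurv_le_one x

lemma hasDerivAt_stdNormalSurv (x : ℝ) : HasDerivAt stdNormalSurv (-stdNormalPDF x) x := by
  have h : stdNormalSurv = fun y => stdNormalSurv 0 - ∫ t in (0 : ℝ)..y, stdNormalPDF t := by
    ext y
    rw [stdNormalSurv, stdNormalSurv, ← intervalIntegral.integral_Ioi_sub_Ioi'
      integrable_stdNormalPDF.integrableOn integrable_stdNormalPDF.integrableOn, sub_sub_cancel]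
  rw [h]
  exact ((continuous_stdNormalPDF.integral_hasStrictDerivAt 0 x).hasDerivAt).const_sub _

lemma continuous_stdNormalSurv : Continuous stdNormalSurv :=
  continuous_iff_continuousAt.2 fun x => (hasDerivAt_stdNormalSurv x).continuousAt

lemma integral_Ioi_comp_sub_div {E : Type*} [NormedAddCommGroup E] [NormedSpace ℝ E]
    (g : ℝ → E) (a c : ℝ) {s : ℝ} (hs : 0 < s) :
    ∫ x in Ioi a, g ((x - c) / s) = s • ∫ y in Ioi ((a - c) / s), g y := by
  let h := (Ioi ((a - c) / s)).indicator g
  calc ∫ x in Ioi a, g ((x - c) / s) = ∫ x, h ((x - c) / s) := by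
        rw [← integral_indicator measurableSet_Ioi]
        congr 1 with x
        simp only [h, indicator_apply, mem_Ioi, div_lt_div_iff_of_pos_right hs,
          sub_lt_sub_iff_right]
    _ = ∫ x, h (x / s) := integral_sub_right_eq_self (fun x => h (x / s)) c
    _ = s • ∫ y, h y := by rw [Measure.integral_comp_div, abs_of_pos hs]
    _ = s • ∫ y in Ioi ((a - c) / s), g y := by rw [integral_indicator measurableSet_Ioi]

lemma integral_Ioi_stdNormalPDF_comp_sub_div (a c : ℝ) {s : ℝ} (hs : 0 < s) :
    ∫ x in Ioi a, s⁻¹ * stdNormalPDF ((x - c) / s) = stdNormalSurv ((a - c) / s) := by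
  rw [integral_const_mul, integral_Ioi_comp_sub_div _ _ _ hs, smul_eq_mul,
    inv_mul_cancel_left₀ hs.ne', stdNormalSurv]

lemma integrable_stdNormalPDF_comp_sub_div (c : ℝ) {s : ℝ} (hs : 0 < s) :
    Integrable fun x => s⁻¹ * stdNormalPDF ((x - c) / s) :=
  ((integrable_stdNormalPDF.comp_div hs.ne').comp_sub_right c).const_mul _

lemma bvnPDF_comm (ρ x y : ℝ) : bvnPDF ρ x y = bvnPDF ρ y x := by
  simp only [bvnPDF]
  ring_nf

lemma bvnPDF_eq_stdNormalPDF_mul {ρ : ℝ} (hρ : ρ ^ 2 < 1) (x y : ℝ) :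
    bvnPDF ρ x y = stdNormalPDF x *
      ((√(1 - ρ ^ 2))⁻¹ * stdNormalPDF ((y - ρ * x) / √(1 - ρ ^ 2))) := by
  have h0 : 0 < 1 - ρ ^ 2 := by linarith
  have hs : 0 < √(1 - ρ ^ 2) := sqrt_pos.2 h0
  have hexp : -(x ^ 2 - 2 * ρ * x * y + y ^ 2) / (2 * (1 - ρ ^ 2))
      = -x ^ 2 / 2 + -((y - ρ * x) / √(1 - ρ ^ 2)) ^ 2 / 2 := by
    rw [div_pow, sq_sqrt h0.le]
    field_simp
    ring
  simp only [bvnPDF, stdNormalPDF]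
  set t := √(2 * π)
  have hπ : t * t = 2 * π := mul_self_sqrt (by positivity)
  rw [hexp, exp_add, ← hπ]
  field_simp

lemma integral_Ioi_bvnPDF_right {ρ : ℝ} (hρ : ρ ^ 2 < 1) (x v : ℝ) :
    ∫ y in Ioi v, bvnPDF ρ x y = stdNormalPDF x * stdNormalSurv ((v - ρ * x) / √(1 - ρ ^ 2)) := by
  simp_rw [bvnPDF_eq_stdNormalPDF_mul hρ x]
  rw [integral_const_mul, integral_Ioi_stdNormalPDF_comp_sub_div _ _ (sqrt_pos.2 (by linarith))]

lemma integral_Ioi_bvnPDF_left {ρ : ℝ} (hρ : ρ ^ 2 < 1) (u y : ℝ) :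
    ∫ x in Ioi u, bvnPDF ρ x y = stdNormalPDF y * stdNormalSurv ((u - ρ * y) / √(1 - ρ ^ 2)) := by
  simp_rw [bvnPDF_comm ρ _ y]
  exact integral_Ioi_bvnPDF_right hρ y u

lemma integrable_bvnPDF_left {ρ : ℝ} (hρ : ρ ^ 2 < 1) (y : ℝ) :
    Integrable fun x => bvnPDF ρ x y := by
  simp_rw [bvnPDF_comm ρ _ y, bvnPDF_eq_stdNormalPDF_mul hρ y]
  exact (integrable_stdNormalPDF_comp_sub_div _ (sqrt_pos.2 (by linarith))).const_mul _

lemma integral_Ioi_mul_stdNormalPDF_mul_stdNormalSurv {ρ : ℝ} (hρ : ρ ^ 2 < 1) (u v : ℝ) :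
    ∫ x in Ioi u, x * stdNormalPDF x * stdNormalSurv ((v - ρ * x) / √(1 - ρ ^ 2))
      = stdNormalPDF u * stdNormalSurv ((v - ρ * u) / √(1 - ρ ^ 2))
        + ρ * ∫ x in Ioi u, bvnPDF ρ x v := by
  set G : ℝ → ℝ := fun x => stdNormalSurv ((v - ρ * x) / √(1 - ρ ^ 2))
  have hderiv (x : ℝ) : HasDerivAt (fun x => -(stdNormalPDF x * G x))
      (x * stdNormalPDF x * G x - ρ * bvnPDF ρ x v) x := by
    have hlin : HasDerivAt (fun x => (v - ρ * x) / √(1 - ρ ^ 2)) (-ρ / √(1 - ρ ^ 2)) x := by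
      simpa using ((hasDerivAt_id x).const_mul ρ).const_sub v |>.div_const _
    have hG := (hasDerivAt_stdNormalSurv _).comp x hlin
    refine ((hasDerivAt_stdNormalPDF x).mul hG).neg.congr_deriv ?_
    rw [bvnPDF_eq_stdNormalPDF_mul hρ, Function.comp_apply]
    ring
  have hG_bound : ∀ᵐ x ∂(volume.restrict (Ioi u)), ‖G x‖ ≤ 1 :=
    Eventually.of_forall fun x => norm_stdNormalSurv_le_one _
  have hG_meas : AEStronglyMeasurable G (volume.restrict (Ioi u)) :=
    (continuous_stdNormalSurv.comp (by fun_prop)).aestronglyMeasurable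
  have hint : IntegrableOn (fun x => x * stdNormalPDF x * G x) (Ioi u) :=
    integrable_mul_stdNormalPDF.integrableOn.mul_bdd hG_meas hG_bound
  have hlim : Tendsto (fun x => -(stdNormalPDF x * G x)) atTop (𝓝 0) := by
    refine squeeze_zero_norm (fun x => ?_) tendsto_stdNormalPDF_atTop
    rw [norm_neg, norm_mul, norm_of_nonneg (stdNormalPDF_nonneg x)]
    exact mul_le_of_le_one_right (stdNormalPDF_nonneg x) (norm_stdNormalSurv_le_one _)
  have hftc := integral_Ioi_of_hasDerivAt_of_tendsto' (fun x _ => hderiv x)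
    (hint.sub ((integrable_bvnPDF_left hρ v).const_mul ρ).integrableOn) hlim
  rw [integral_sub hint ((integrable_bvnPDF_left hρ v).const_mul ρ).integrableOn,
    integral_const_mul] at hftc
  linarith

/-- The first truncated moment `m₁₀` identity for the standard bivariate
normal distribution with correlation `ρ ∈ (-1, 1)`. -/
theorem stmt_2 (ρ u v : ℝ) (hρ₁ : -1 < ρ) (hρ₂ : ρ < 1) :
    (∫ x in Set.Ioi u, ∫ y in Set.Ioi v, x * bvnPDF ρ x y)
      = stdNormalPDF u * stdNormalSurv ((v - ρ * u) / Real.sqrt (1 - ρ ^ 2))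
        + ρ * stdNormalPDF v * stdNormalSurv ((u - ρ * v) / Real.sqrt (1 - ρ ^ 2)) := by
  have hρ : ρ ^ 2 < 1 := by nlinarith
  simp_rw [integral_const_mul, integral_Ioi_bvnPDF_right hρ, ← mul_assoc]
  rw [integral_Ioi_mul_stdNormalPDF_mul_stdNormalSurv hρ, integral_Ioi_bvnPDF_left hρ, mul_assoc ρ]
end

section
/- Let (Ω, 𝔽, P) be a probability space, let A₁, A₂ ⊂ ℝ² be disjoint measurable sets with 0 < |Aᵢ| < ∞, and let D : Ω × ℝ² → ℝ be a nonnegative measurable damage function such that the random variables Uᵢ(ω) = ∫_{Aᵢ} D(ω,s) ds are square-integrable. Define L_i = Uᵢ/|Aᵢ| and L = (U₁ + U₂)/(|A₁| + |A₂|) (the normalized loss over A₁ ∪ A₂). Then Var(L) ≤ Var(L₁) + Var(L₂); i.e. the risk measure ℛ₁(·, D) = Var(L(·, D)) is spatially sub-additive. -/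
/-!
With `a = |A₁|`, `b = |A₂|`, the pooled loss is the convex combination
`L = a/(a+b) · L₁ + b/(a+b) · L₂`. Variance is convex, because
`2 cov[X, Y] ≤ Var X + Var Y` (from `Var (X - Y) ≥ 0`), so `Var L` is at most the
corresponding weighted average of `Var L₁` and `Var L₂`, hence at most their sum.
-/

open MeasureTheory ProbabilityTheory

namespace ProbabilityTheory

variable {Ω : Type*} [MeasurableSpace Ω] {μ : Measure Ω} [IsFiniteMeasure μ] {X Y : Ω → ℝ}

lemma two_mul_covariance_le_variance_add (hX : MemLp X 2 μ) (hY : MemLp Y 2 μ) :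
    2 * cov[X, Y; μ] ≤ Var[X; μ] + Var[Y; μ] := by
  have := variance_nonneg (X - Y) μ
  rw [variance_sub hX hY] at this
  linarith

lemma variance_convexComb_le (hX : MemLp X 2 μ) (hY : MemLp Y 2 μ) {a b : ℝ}
    (ha : 0 ≤ a) (hb : 0 ≤ b) (hab : a + b = 1) :
    Var[fun ω ↦ a * X ω + b * Y ω; μ] ≤ a * Var[X; μ] + b * Var[Y; μ] := by
  rw [variance_fun_add (hX.const_mul a) (hY.const_mul b), variance_const_mul,
    variance_const_mul, covariance_const_mul_left, covariance_const_mul_right]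
  have hcov := mul_le_mul_of_nonneg_left (two_mul_covariance_le_variance_add hX hY)
    (mul_nonneg ha hb)
  calc a ^ 2 * Var[X; μ] + 2 * (a * (b * cov[X, Y; μ])) + b ^ 2 * Var[Y; μ]
      ≤ a ^ 2 * Var[X; μ] + a * b * (Var[X; μ] + Var[Y; μ]) + b ^ 2 * Var[Y; μ] := by
        linarith
    _ = (a + b) * (a * Var[X; μ] + b * Var[Y; μ]) := by ring
    _ = a * Var[X; μ] + b * Var[Y; μ] := by rw [hab, one_mul]

lemma variance_convexComb_le_add (hX : MemLp X 2 μ) (hY : MemLp Y 2 μ) {a b : ℝ}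
    (ha : 0 ≤ a) (hb : 0 ≤ b) (hab : a + b = 1) :
    Var[fun ω ↦ a * X ω + b * Y ω; μ] ≤ Var[X; μ] + Var[Y; μ] := by
  have hVX := variance_nonneg X μ
  have hVY := variance_nonneg Y μ
  refine (variance_convexComb_le hX hY ha hb hab).trans ?_
  nlinarith

end ProbabilityTheory

theorem stmt_6_general {Ω : Type*} [MeasurableSpace Ω] (P : Measure Ω) [IsProbabilityMeasure P]
    (A₁ A₂ : Set (ℝ × ℝ))
    (hA₁0 : 0 < volume A₁) (hA₁fin : volume A₁ < ⊤)
    (hA₂0 : 0 < volume A₂) (hA₂fin : volume A₂ < ⊤)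
    (D : Ω → ℝ × ℝ → ℝ)
    (hU₁ : MemLp (fun ω => ∫ s in A₁, D ω s) 2 P)
    (hU₂ : MemLp (fun ω => ∫ s in A₂, D ω s) 2 P) :
    ProbabilityTheory.variance
        (fun ω => ((volume A₁).toReal + (volume A₂).toReal)⁻¹ *
          ((∫ s in A₁, D ω s) + (∫ s in A₂, D ω s))) P
      ≤ ProbabilityTheory.variance (fun ω => (volume A₁).toReal⁻¹ * ∫ s in A₁, D ω s) P
        + ProbabilityTheory.variance (fun ω => (volume A₂).toReal⁻¹ * ∫ s in A₂, D ω s) P := by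
  set a := (volume A₁).toReal
  set b := (volume A₂).toReal
  have ha : 0 < a := ENNReal.toReal_pos hA₁0.ne' hA₁fin.ne
  have hb : 0 < b := ENNReal.toReal_pos hA₂0.ne' hA₂fin.ne
  have hL : (fun ω => (a + b)⁻¹ * ((∫ s in A₁, D ω s) + (∫ s in A₂, D ω s)))
      = fun ω => a / (a + b) * (a⁻¹ * ∫ s in A₁, D ω s)
          + b / (a + b) * (b⁻¹ * ∫ s in A₂, D ω s) := by
    funext ω
    field_simp
  rw [hL]
  exact variance_convexComb_le_add (hU₁.const_mul _) (hU₂.const_mul _) (by positivity)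
    (by positivity) (by field_simp)

/-- Spatial sub-additivity of the variance component of the spatial risk measure:
for disjoint regions `A₁, A₂` and a nonnegative damage function `D`,
`Var(L(A₁ ∪ A₂, D)) ≤ Var(L(A₁, D)) + Var(L(A₂, D))`. -/
theorem stmt_6 {Ω : Type*} [MeasurableSpace Ω] (P : Measure Ω) [IsProbabilityMeasure P]
    (A₁ A₂ : Set (ℝ × ℝ)) (hA₁ : MeasurableSet A₁) (hA₂ : MeasurableSet A₂)
    (hdisj : Disjoint A₁ A₂)
    (hA₁0 : 0 < volume A₁) (hA₁fin : volume A₁ < ⊤)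
    (hA₂0 : 0 < volume A₂) (hA₂fin : volume A₂ < ⊤)
    (D : Ω → ℝ × ℝ → ℝ)
    (hD : Measurable fun p : Ω × (ℝ × ℝ) => D p.1 p.2)
    (hpos : ∀ ω s, 0 ≤ D ω s)
    (hU₁ : MemLp (fun ω => ∫ s in A₁, D ω s) 2 P)
    (hU₂ : MemLp (fun ω => ∫ s in A₂, D ω s) 2 P) :
    ProbabilityTheory.variance
        (fun ω => ((volume A₁).toReal + (volume A₂).toReal)⁻¹ *
          ((∫ s in A₁, D ω s) + (∫ s in A₂, D ω s))) P
      ≤ ProbabilityTheory.variance (fun ω => (volume A₁).toReal⁻¹ * ∫ s in A₁, D ω s) P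
        + ProbabilityTheory.variance (fun ω => (volume A₂).toReal⁻¹ * ∫ s in A₂, D ω s) P :=
  stmt_6_general P A₁ A₂ hA₁0 hA₁fin hA₂0 hA₂fin D hU₁ hU₂
end

section
/- Let A = [0,R]² be the square of side R > 0 and let γ : [0,∞) → ℝ be a bounded measurable non-increasing function. Then the map λ ↦ (1/|λA|²)·∫_{λA×λA} γ(‖s − t‖) ds dt is non-increasing on (0,∞), where λA = {λx : x ∈ A}. -/
/-!
Substituting `s = λx`, `t = λy` turns the normalized integral over `λA × λA` into
`|A|⁻² ∫_A ∫_A γ(λ‖x - y‖) dx dy`: the Jacobian `λ⁴` of the substitution cancels against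
`|λA|² = λ⁴|A|²`. Since `γ` is non-increasing, the integrand decreases pointwise in `λ`.
-/

open MeasureTheory Pointwise

/-- The square `[0,R]² ⊂ ℝ²`. -/
def squareRegion (R : ℝ) : Set (EuclideanSpace ℝ (Fin 2)) :=
  {x | x 0 ∈ Set.Icc 0 R ∧ x 1 ∈ Set.Icc 0 R}

open Function Module

section BoundedKernel

variable {X Y : Type*} [MeasurableSpace X] [MeasurableSpace Y] {μ : Measure X} {ν : Measure Y}
  [IsFiniteMeasure μ] [IsFiniteMeasure ν] {F G : X → Y → ℝ} {M : ℝ}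

theorem integrable_integral_of_bounded (hF : Measurable (uncurry F)) (hM : ∀ x y, |F x y| ≤ M) :
    Integrable (fun x => ∫ y, F x y ∂ν) μ :=
  .of_bound hF.stronglyMeasurable.integral_prod_right.aestronglyMeasurable (M * ν.real Set.univ)
    (ae_of_all _ fun _ => norm_integral_le_of_norm_le_const (ae_of_all _ fun y => hM _ y))

theorem integral_integral_mono_of_bounded (hF : Measurable (uncurry F))
    (hG : Measurable (uncurry G)) (hFM : ∀ x y, |F x y| ≤ M) (hGM : ∀ x y, |G x y| ≤ M)
    (hFG : ∀ x y, F x y ≤ G x y) :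
    ∫ x, ∫ y, F x y ∂ν ∂μ ≤ ∫ x, ∫ y, G x y ∂ν ∂μ := by
  refine integral_mono (integrable_integral_of_bounded hF hFM)
    (integrable_integral_of_bounded hG hGM) fun x => integral_mono ?_ ?_ (hFG x)
  · exact .of_bound hF.of_uncurry_left.aestronglyMeasurable M (ae_of_all _ (hFM x))
  · exact .of_bound hG.of_uncurry_left.aestronglyMeasurable M (ae_of_all _ (hGM x))

end BoundedKernel

theorem antitoneOn_setIntegral_setIntegral_comp_mul_norm_sub {E : Type*} [NormedAddCommGroup E]
    [MeasurableSpace E] [BorelSpace E] [SecondCountableTopology E] {μ : Measure E} {s : Set E}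
    (hs : μ s ≠ ⊤) {γ : ℝ → ℝ} (hγ : Measurable γ) {M : ℝ} (hM : ∀ h, 0 ≤ h → |γ h| ≤ M)
    (hanti : AntitoneOn γ (Set.Ici 0)) :
    AntitoneOn (fun l => ∫ x in s, ∫ y in s, γ (l * ‖x - y‖) ∂μ ∂μ) (Set.Ici 0) := by
  have : IsFiniteMeasure (μ.restrict s) := isFiniteMeasure_restrict.mpr hs
  have kernel_measurable (l : ℝ) : Measurable (uncurry fun x y : E => γ (l * ‖x - y‖)) :=
    hγ.comp (measurable_const.mul (measurable_fst.sub measurable_snd).norm)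
  have kernel_bounded {l : ℝ} (hl : 0 ≤ l) (x y : E) : |γ (l * ‖x - y‖)| ≤ M :=
    hM _ (by positivity)
  intro l₁ (hl₁ : 0 ≤ l₁) l₂ (hl₂ : 0 ≤ l₂) hle
  refine integral_integral_mono_of_bounded (kernel_measurable l₂) (kernel_measurable l₁)
    (kernel_bounded hl₂) (kernel_bounded hl₁) fun x y => ?_
  exact hanti (mul_nonneg hl₁ (norm_nonneg _)) (mul_nonneg hl₂ (norm_nonneg _))
    (mul_le_mul_of_nonneg_right hle (norm_nonneg _))

/-- For `γ = 𝒢(·, u)` this is the paper's `ℛ₁(s, 𝒟⁺_{X,u})`. -/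
noncomputable def pairAverage {E : Type*} [SeminormedAddCommGroup E] [MeasurableSpace E]
    (μ : Measure E) (γ : ℝ → ℝ) (s : Set E) : ℝ :=
  ((μ s).toReal ^ 2)⁻¹ * ∫ x in s, ∫ y in s, γ ‖x - y‖ ∂μ ∂μ

section Scaling

variable {E : Type*} [NormedAddCommGroup E] [NormedSpace ℝ E] [FiniteDimensional ℝ E]
  [MeasurableSpace E] [BorelSpace E] (μ : Measure E) [μ.IsAddHaarMeasure]

theorem setIntegral_smul_set {F : Type*} [NormedAddCommGroup F] [NormedSpace ℝ F] (f : E → F)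
    (s : Set E) {l : ℝ} (hl : 0 < l) :
    ∫ x in l • s, f x ∂μ = l ^ finrank ℝ E • ∫ x in s, f (l • x) ∂μ := by
  rw [Measure.setIntegral_comp_smul_of_pos μ f s hl, smul_inv_smul₀ (by positivity)]

theorem setIntegral_setIntegral_smul_set_norm_sub (γ : ℝ → ℝ) (s : Set E) {l : ℝ} (hl : 0 < l) :
    ∫ x in l • s, ∫ y in l • s, γ ‖x - y‖ ∂μ ∂μ
      = (l ^ finrank ℝ E) ^ 2 * ∫ x in s, ∫ y in s, γ (l * ‖x - y‖) ∂μ ∂μ := by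
  have inner (x : E) : ∫ y in l • s, γ ‖l • x - y‖ ∂μ
      = l ^ finrank ℝ E * ∫ y in s, γ (l * ‖x - y‖) ∂μ := by
    simp_rw [setIntegral_smul_set μ _ s hl, ← smul_sub, norm_smul, Real.norm_of_nonneg hl.le,
      smul_eq_mul]
  rw [setIntegral_smul_set μ _ s hl, smul_eq_mul]
  simp_rw [inner, integral_const_mul]
  ring

theorem pairAverage_smul_set (γ : ℝ → ℝ) (s : Set E) {l : ℝ} (hl : 0 < l) :
    pairAverage μ γ (l • s) = ((μ s).toReal ^ 2)⁻¹ * ∫ x in s, ∫ y in s, γ (l * ‖x - y‖) ∂μ ∂μ := by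
  rw [pairAverage, setIntegral_setIntegral_smul_set_norm_sub μ γ s hl,
    Measure.addHaar_smul_of_nonneg μ hl.le, ENNReal.toReal_mul,
    ENNReal.toReal_ofReal (by positivity), mul_pow, mul_inv, mul_mul_mul_comm,
    inv_mul_cancel₀ (by positivity), one_mul]

end Scaling

theorem isCompact_squareRegion (R : ℝ) : IsCompact (squareRegion R) := by
  have : squareRegion R = WithLp.ofLp ⁻¹' Set.Icc 0 (fun _ => R) := by
    ext x
    simp only [squareRegion, Set.mem_ofPred_eq, Set.mem_preimage, Set.mem_Icc, Pi.le_def,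
      Pi.zero_apply, Fin.forall_fin_two]
    exact and_and_and_comm
  rw [this]
  exact (PiLp.homeomorph 2 _).isCompact_preimage.mpr isCompact_Icc

theorem stmt_12_general (R : ℝ) (γ : ℝ → ℝ)
    (hmeas : Measurable γ) (hbdd : ∃ M, ∀ h : ℝ, 0 ≤ h → |γ h| ≤ M)
    (hanti : ∀ a b : ℝ, 0 ≤ a → a ≤ b → γ b ≤ γ a) :
    ∀ l₁ l₂ : ℝ, 0 < l₁ → l₁ ≤ l₂ →
      ((volume (l₂ • squareRegion R)).toReal ^ 2)⁻¹ *
          (∫ s in l₂ • squareRegion R, ∫ t in l₂ • squareRegion R, γ ‖s - t‖)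
        ≤ ((volume (l₁ • squareRegion R)).toReal ^ 2)⁻¹ *
            (∫ s in l₁ • squareRegion R, ∫ t in l₁ • squareRegion R, γ ‖s - t‖) := by
  intro l₁ l₂ hl₁ hle
  obtain ⟨M, hM⟩ := hbdd
  have scaled_antitone := antitoneOn_setIntegral_setIntegral_comp_mul_norm_sub
    ((isCompact_squareRegion R).measure_ne_top (μ := volume)) hmeas hM
    fun a ha b _ hab => hanti a b ha hab
  change pairAverage volume γ (l₂ • squareRegion R) ≤ pairAverage volume γ (l₁ • squareRegion R)
  rw [pairAverage_smul_set volume γ _ (hl₁.trans_le hle), pairAverage_smul_set volume γ _ hl₁]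
  exact mul_le_mul_of_nonneg_left (scaled_antitone hl₁.le (hl₁.le.trans hle) hle) (by positivity)

/-- For the square `A = [0,R]²` and a bounded measurable non-increasing `γ`, the map
`λ ↦ (1/|λA|²)·∫_{λA×λA} γ(‖s-t‖) ds dt` is non-increasing on `(0,∞)`. -/
theorem stmt_12 (R : ℝ) (hR : 0 < R) (γ : ℝ → ℝ)
    (hmeas : Measurable γ) (hbdd : ∃ M, ∀ h : ℝ, 0 ≤ h → |γ h| ≤ M)
    (hanti : ∀ a b : ℝ, 0 ≤ a → a ≤ b → γ b ≤ γ a) :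
    ∀ l₁ l₂ : ℝ, 0 < l₁ → l₁ ≤ l₂ →
      ((volume (l₂ • squareRegion R)).toReal ^ 2)⁻¹ *
          (∫ s in l₂ • squareRegion R, ∫ t in l₂ • squareRegion R, γ ‖s - t‖)
        ≤ ((volume (l₁ • squareRegion R)).toReal ^ 2)⁻¹ *
            (∫ s in l₁ • squareRegion R, ∫ t in l₁ • squareRegion R, γ ‖s - t‖) :=
  stmt_12_general R γ hmeas hbdd hanti
end

section
/- Let A₁ and A₂ be two (axis-parallel) squares in ℝ² with |A₁| ≤ |A₂|, and let γ : [0,∞) → ℝ be a bounded measurable nonnegative non-increasing function. Then (1/|A₂|²)·∫_{A₂×A₂} γ(‖s − t‖) ds dt ≤ (1/|A₁|²)·∫_{A₁×A₁} γ(‖s − t‖) ds dt. In other words, the spatial risk measure ℛ₁(·) attached to γ is anti-monotonic on squares. -/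
/-!
The map `y ↦ a + R • y` carries the unit square onto `axisSquare a R` and multiplies Lebesgue
measure by `R²`. Applied in both variables, this cancels the normalisation `|A|⁻²` and turns
the normalised double integral over `axisSquare a R` into `∫∫ γ (R * ‖u - v‖)` over the unit
square. As `γ` is non-increasing this is non-increasing in `R`, and `|A₁| ≤ |A₂|` means `R₁ ≤ R₂`.
-/

open MeasureTheory

/-- The axis-parallel square with lower-left corner `a` and side `R` in `ℝ²`. -/
def axisSquare (a : EuclideanSpace ℝ (Fin 2)) (R : ℝ) : Set (EuclideanSpace ℝ (Fin 2)) :=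
  {x | ∀ i : Fin 2, x i ∈ Set.Icc (a i) (a i + R)}

open Set Module

section Homothety

variable {E : Type*} [NormedAddCommGroup E] [NormedSpace ℝ E] [MeasurableSpace E] [BorelSpace E]
  [FiniteDimensional ℝ E] (μ : Measure E) [μ.IsAddHaarMeasure]

theorem map_add_smul_addHaar (a : E) {R : ℝ} (hR : R ≠ 0) :
    μ.map (fun y ↦ a + R • y) = ENNReal.ofReal |(R ^ finrank ℝ E)⁻¹| • μ := by
  have hcomp : (fun y : E ↦ a + R • y) = (a + ·) ∘ (R • ·) := rfl
  rw [hcomp, ← Measure.map_map (measurable_const_add a) (measurable_const_smul R),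
    Measure.map_addHaar_smul μ hR, Measure.map_smul, map_add_left_eq_self]

theorem setIntegral_preimage_add_smul (a : E) {R : ℝ} (hR : R ≠ 0) (f : E → ℝ) (t : Set E) :
    ∫ y in (fun y ↦ a + R • y) ⁻¹' t, f (a + R • y) ∂μ =
      |(R ^ finrank ℝ E)⁻¹| * ∫ x in t, f x ∂μ := by
  have hemb : MeasurableEmbedding fun y : E ↦ a + R • y :=
    ((Homeomorph.smul (Units.mk0 R hR)).trans (Homeomorph.addLeft a)).measurableEmbedding
  rw [← hemb.setIntegral_map, map_add_smul_addHaar μ a hR, Measure.restrict_smul,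
    integral_smul_measure, ENNReal.toReal_ofReal (abs_nonneg _), smul_eq_mul]

end Homothety

local notation "ℝ²" => EuclideanSpace ℝ (Fin 2)

theorem volume_axisSquare (a : ℝ²) {R : ℝ} (hR : 0 ≤ R) :
    volume (axisSquare a R) = ENNReal.ofReal (R ^ 2) := by
  have h : axisSquare a R =
      (MeasurableEquiv.toLp 2 (Fin 2 → ℝ)).symm ⁻¹' univ.pi fun i ↦ Icc (a i) (a i + R) := by
    ext x; simp [axisSquare, Pi.le_def, forall_and]
  rw [h, (EuclideanSpace.volume_preserving_symm_measurableEquiv_toLp (Fin 2)).measure_preimage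
      (by measurability), volume_pi_pi]
  simp [Real.volume_Icc, ← ENNReal.ofReal_mul hR, sq]

theorem preimage_add_smul_axisSquare (a : ℝ²) {R : ℝ} (hR : 0 < R) :
    (fun y ↦ a + R • y) ⁻¹' axisSquare a R = axisSquare 0 1 := by
  ext y
  simp only [axisSquare, mem_preimage, mem_ofPred_eq, mem_Icc, PiLp.add_apply, PiLp.smul_apply,
    smul_eq_mul, PiLp.zero_apply, zero_add]
  refine forall_congr' fun i ↦ ?_
  constructor
  · rintro ⟨h₀, h₁⟩
    constructor <;> nlinarith
  · rintro ⟨h₀, h₁⟩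
    constructor <;> nlinarith

theorem setIntegral_axisSquare_eq (a : ℝ²) {R : ℝ} (hR : 0 < R) (f : ℝ² → ℝ) :
    ∫ x in axisSquare a R, f x = R ^ 2 * ∫ y in axisSquare 0 1, f (a + R • y) := by
  rw [← preimage_add_smul_axisSquare a hR, setIntegral_preimage_add_smul volume a hR.ne',
    finrank_euclideanSpace_fin, abs_of_pos (by positivity), ← mul_assoc,
    mul_inv_cancel₀ (by positivity), one_mul]

theorem normalized_pairIntegral_axisSquare (a : ℝ²) {R : ℝ} (hR : 0 < R) (γ : ℝ → ℝ) :
    ((volume (axisSquare a R)).toReal ^ 2)⁻¹ *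
        (∫ s in axisSquare a R, ∫ t in axisSquare a R, γ ‖s - t‖)
      = ∫ u in axisSquare 0 1, ∫ v in axisSquare 0 1, γ (R * ‖u - v‖) := by
  have hnorm (u v : ℝ²) : ‖(a + R • u) - (a + R • v)‖ = R * ‖u - v‖ := by
    rw [add_sub_add_left_eq_sub, ← smul_sub, norm_smul, Real.norm_of_nonneg hR.le]
  simp_rw [setIntegral_axisSquare_eq a hR, hnorm, integral_const_mul,
    volume_axisSquare a hR.le, ENNReal.toReal_ofReal (by positivity : 0 ≤ R ^ 2)]
  field_simp

section Antitone

theorem integrable_comp_of_nonneg {X : Type*} [MeasurableSpace X] (ν : Measure X)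
    [IsFiniteMeasure ν] {γ : ℝ → ℝ} (hγ : Measurable γ) {M : ℝ} (hM : ∀ x, 0 ≤ x → |γ x| ≤ M)
    {f : X → ℝ} (hf : Measurable f) (hf₀ : ∀ x, 0 ≤ f x) : Integrable (fun x ↦ γ (f x)) ν :=
  .of_bound (hγ.comp hf).aestronglyMeasurable M (.of_forall fun x ↦ hM _ (hf₀ x))

variable {E : Type*} [NormedAddCommGroup E] [MeasurableSpace E] [MeasurableSub₂ E]
  [OpensMeasurableSpace E] (μ : Measure E) [IsFiniteMeasure μ]

theorem integral_integral_comp_mul_norm_sub_antitone {γ : ℝ → ℝ} (hγ : Measurable γ) {M : ℝ}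
    (hM : ∀ x, 0 ≤ x → |γ x| ≤ M) (hanti : AntitoneOn γ (Ici 0)) {r R : ℝ} (hr : 0 ≤ r)
    (hrR : r ≤ R) :
    ∫ u, ∫ v, γ (R * ‖u - v‖) ∂μ ∂μ ≤ ∫ u, ∫ v, γ (r * ‖u - v‖) ∂μ ∂μ := by
  have hR : 0 ≤ R := hr.trans hrR
  have houter {ρ : ℝ} (hρ : 0 ≤ ρ) : Integrable (fun u ↦ ∫ v, γ (ρ * ‖u - v‖) ∂μ) μ :=
    (integrable_comp_of_nonneg (μ.prod μ) hγ hM (f := fun p ↦ ρ * ‖p.1 - p.2‖) (by fun_prop)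
      fun p ↦ by positivity).integral_prod_left
  have hinner {ρ : ℝ} (hρ : 0 ≤ ρ) (u : E) : Integrable (fun v ↦ γ (ρ * ‖u - v‖)) μ :=
    integrable_comp_of_nonneg μ hγ hM (f := fun v ↦ ρ * ‖u - v‖) (by fun_prop)
      fun v ↦ by positivity
  refine integral_mono (houter hR) (houter hr) fun u ↦ ?_
  refine integral_mono (hinner hR u) (hinner hr u) fun v ↦ ?_
  exact hanti (mem_Ici.2 (by positivity)) (mem_Ici.2 (by positivity)) (by gcongr)

end Antitone

theorem stmt_14_general (a₁ a₂ : EuclideanSpace ℝ (Fin 2)) (R₁ R₂ : ℝ)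
    (hR₁ : 0 < R₁) (hR₂ : 0 < R₂)
    (hvol : volume (axisSquare a₁ R₁) ≤ volume (axisSquare a₂ R₂))
    (γ : ℝ → ℝ) (hmeas : Measurable γ)
    (hbdd : ∃ M, ∀ h : ℝ, 0 ≤ h → |γ h| ≤ M)
    (hanti : ∀ a b : ℝ, 0 ≤ a → a ≤ b → γ b ≤ γ a) :
    ((volume (axisSquare a₂ R₂)).toReal ^ 2)⁻¹ *
        (∫ s in axisSquare a₂ R₂, ∫ t in axisSquare a₂ R₂, γ ‖s - t‖)
      ≤ ((volume (axisSquare a₁ R₁)).toReal ^ 2)⁻¹ *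
          (∫ s in axisSquare a₁ R₁, ∫ t in axisSquare a₁ R₁, γ ‖s - t‖) := by
  have hR₁₂ : R₁ ≤ R₂ := by
    rwa [volume_axisSquare a₁ hR₁.le, volume_axisSquare a₂ hR₂.le,
      ENNReal.ofReal_le_ofReal_iff (by positivity), pow_le_pow_iff_left₀ hR₁.le hR₂.le two_ne_zero]
      at hvol
  have : IsFiniteMeasure (volume.restrict (axisSquare 0 1)) := by
    rw [isFiniteMeasure_restrict, volume_axisSquare 0 zero_le_one]
    exact ENNReal.ofReal_ne_top
  obtain ⟨M, hM⟩ := hbdd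
  rw [normalized_pairIntegral_axisSquare a₁ hR₁, normalized_pairIntegral_axisSquare a₂ hR₂]
  exact integral_integral_comp_mul_norm_sub_antitone _ hmeas hM
    (fun a ha _ _ hab ↦ hanti a _ ha hab) hR₁.le hR₁₂

/-- Anti-monotonicity on squares of the spatial risk measure attached to a bounded
measurable nonnegative non-increasing `γ`: if `|A₁| ≤ |A₂|` then
`(1/|A₂|²)·∫_{A₂×A₂} γ(‖s-t‖) ≤ (1/|A₁|²)·∫_{A₁×A₁} γ(‖s-t‖)`. -/
theorem stmt_14 (a₁ a₂ : EuclideanSpace ℝ (Fin 2)) (R₁ R₂ : ℝ)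
    (hR₁ : 0 < R₁) (hR₂ : 0 < R₂)
    (hvol : volume (axisSquare a₁ R₁) ≤ volume (axisSquare a₂ R₂))
    (γ : ℝ → ℝ) (hmeas : Measurable γ)
    (hbdd : ∃ M, ∀ h : ℝ, 0 ≤ h → |γ h| ≤ M)
    (hpos : ∀ h : ℝ, 0 ≤ h → 0 ≤ γ h)
    (hanti : ∀ a b : ℝ, 0 ≤ a → a ≤ b → γ b ≤ γ a) :
    ((volume (axisSquare a₂ R₂)).toReal ^ 2)⁻¹ *
        (∫ s in axisSquare a₂ R₂, ∫ t in axisSquare a₂ R₂, γ ‖s - t‖)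
      ≤ ((volume (axisSquare a₁ R₁)).toReal ^ 2)⁻¹ *
          (∫ s in axisSquare a₁ R₁, ∫ t in axisSquare a₁ R₁, γ ‖s - t‖) :=
  stmt_14_general a₁ a₂ R₁ R₂ hR₁ hR₂ hvol γ hmeas hbdd hanti
end
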